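/- Let (Y,τ) be a Hausdorff space possessing a Sorgenfrey base. Then there exists a continuous open surjection f : (ℕ → ℕ, σ_𝕊) → (Y,τ). -/
import Mathlib


open Set Filter Topology TopologicalSpace Function

noncomputable section

/-- The Sorgenfrey topology on `ℝ`: generated by half-open intervals `[a, b)`. -/
def sorgenfreyTop : TopologicalSpace ℝ :=
  TopologicalSpace.generateFrom {s : Set ℝ | ∃ a b : ℝ, s = Set.Ico a b}

/-- The initial segment `p↾n` of an infinite sequence, as a list. -/
def restr (p : ℕ → ℕ) (n : ℕ) : List ℕ := (List.range n).map p

/-- `fruit V p = ⋂ n, V (p↾n)`. -/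
def fruit {X : Type*} (V : List ℕ → Set X) (p : ℕ → ℕ) : Set X := ⋂ n, V (restr p n)

/-- A Souslin scheme is covering if `V ⟨⟩ = X` and `V a = ⋃ n, V (a ⌢ n)`. -/
def Covering {X : Type*} (V : List ℕ → Set X) : Prop :=
  V [] = Set.univ ∧ ∀ a : List ℕ, V a = ⋃ n : ℕ, V (a ++ [n])

/-- A Souslin scheme is complete if every fruit is nonempty. -/
def CompleteScheme {X : Type*} (V : List ℕ → Set X) : Prop :=
  ∀ q : ℕ → ℕ, (fruit V q).Nonempty

/-- A Souslin scheme has strict branches if every fruit is a singleton. -/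
def StrictBranches {X : Type*} (V : List ℕ → Set X) : Prop :=
  ∀ q : ℕ → ℕ, ∃ x : X, fruit V q = {x}

/-- A Souslin scheme is locally strict. -/
def LocallyStrict {X : Type*} (V : List ℕ → Set X) : Prop :=
  (∀ a : List ℕ, V a = ⋃ n : ℕ, V (a ++ [n])) ∧
  ∀ a : List ℕ, ∀ m k : ℕ, m ≠ k → V (a ++ [m]) ∩ V (a ++ [k]) = ∅

/-- `q ◁ p` for infinite sequences: `q↾n = p↾n` and `q n < p n` for some `n`. -/
def tri (q p : ℕ → ℕ) : Prop := ∃ n : ℕ, restr q n = restr p n ∧ q n < p n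

/-- `q ⊴ p` for infinite sequences. -/
def trieq (q p : ℕ → ℕ) : Prop := tri q p ∨ q = p

/-- `q ◁ s` where `q` is an infinite sequence and `s` a finite one. -/
def triL (q : ℕ → ℕ) (s : List ℕ) : Prop :=
  ∃ n : ℕ, ∃ h : n < s.length, restr q n = s.take n ∧ q n < s.get ⟨n, h⟩

/-- `rsequences(q, n) = {p | q ◁ p ∧ q↾n = p↾n}`. -/
def rsequences (q : ℕ → ℕ) (n : ℕ) : Set (ℕ → ℕ) :=
  {p | tri q p ∧ restr q n = restr p n}

/-- `rsubtree(q, n)`: finite sequences `s` such that `q↾n ⊏ s` and `q ◁ s`. -/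
def rsubtree (q : ℕ → ℕ) (n : ℕ) : Set (List ℕ) :=
  {s | restr q n <+: s ∧ restr q n ≠ s ∧ triL q s}

/-- `cut(V, q, n) = ⋃ {fruit(V, p) : p ∈ rsequences(q, n)}`. -/
def cut {X : Type*} (V : List ℕ → Set X) (q : ℕ → ℕ) (n : ℕ) : Set X :=
  ⋃ p ∈ rsequences q n, fruit V p

/-- `branches(V, x) = {q | x ∈ fruit(V, q)}`. -/
def branches {X : Type*} (V : List ℕ → Set X) (x : X) : Set (ℕ → ℕ) :=
  {q | x ∈ fruit V q}

/-- `q` is a `τ`-base branch of `x` in `V`: `q ∈ branches(V, x)` and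
`{cut(V, q, m) ∪ {x} : m ∈ ℕ}` is a neighborhood base of open sets at `x`. -/
def IsBaseBranch {X : Type*} (τ : TopologicalSpace X) (V : List ℕ → Set X)
    (q : ℕ → ℕ) (x : X) : Prop :=
  x ∈ fruit V q ∧ (∀ m : ℕ, IsOpen[τ] (cut V q m ∪ {x})) ∧
    (@nhds X τ x).HasBasis (fun _ : ℕ => True) (fun m : ℕ => cut V q m ∪ {x})

/-- `BB(V, x, τ)`: the set of `τ`-base branches of `x` in `V`. -/
def BB {X : Type*} (τ : TopologicalSpace X) (V : List ℕ → Set X) (x : X) : Set (ℕ → ℕ) :=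
  {q | IsBaseBranch τ V q x}

/-- A Sorgenfrey base for a space: an open complete covering Souslin scheme
satisfying (S1) and (S2). -/
def IsSorgenfreyBase {X : Type*} (τ : TopologicalSpace X) (V : List ℕ → Set X) : Prop :=
  (∀ a : List ℕ, IsOpen[τ] (V a)) ∧ CompleteScheme V ∧ Covering V ∧
  (∀ x : X, ∀ q ∈ branches V x, ∀ n : ℕ, ∃ t ∈ BB τ V x, restr t n = restr q n) ∧
  (∀ q : ℕ → ℕ, ∃ z : X, q ∈ BB τ V z)

/-- The Souslin scheme `S` on the Baire set: `S a = {p | a ⊑ p}`. -/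
def SchemeS (a : List ℕ) : Set (ℕ → ℕ) := {p | restr p a.length = a}

/-- The topology `σ_𝕊` on `ℕ → ℕ` generated by the base
`{cut(S, p, n) ∪ {p} : p ∈ ℕ → ℕ, n ∈ ℕ}`. -/
def sigmaS : TopologicalSpace (ℕ → ℕ) :=
  TopologicalSpace.generateFrom
    {U : Set (ℕ → ℕ) | ∃ p : ℕ → ℕ, ∃ n : ℕ, U = cut SchemeS p n ∪ {p}}

lemma restr_eq_iff {q r : ℕ → ℕ} {n : ℕ} :
    restr q n = restr r n ↔ ∀ i < n, q i = r i := by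
  simp [restr, List.map_eq_map_iff, List.mem_range]

lemma restr_succ (q : ℕ → ℕ) (n : ℕ) : restr q (n+1) = restr q n ++ [q n] := by
  simp [restr, List.range_succ]

lemma restr_mono {q r : ℕ → ℕ} {n m : ℕ} (h : restr q m = restr r m) (hnm : n ≤ m) :
    restr q n = restr r n := by
  rw [restr_eq_iff] at h ⊢
  exact fun i hi => h i (lt_of_lt_of_le hi hnm)

lemma rseq_anti {q : ℕ → ℕ} {n m : ℕ} (h : n ≤ m) :
    rsequences q m ⊆ rsequences q n := by
  rintro r ⟨ht, hr⟩
  exact ⟨ht, restr_mono hr h⟩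

lemma cut_anti {X : Type*} (V : List ℕ → Set X) {q : ℕ → ℕ} {n m : ℕ} (h : n ≤ m) :
    cut V q m ⊆ cut V q n := by
  intro x hx
  rcases mem_iUnion₂.1 hx with ⟨r, hr, hxr⟩
  exact mem_iUnion₂.2 ⟨r, rseq_anti h hr, hxr⟩

lemma rseq_self_mem (q : ℕ → ℕ) (n : ℕ) :
    Function.update q n (q n + 1) ∈ rsequences q n := by
  have hres : ∀ m ≤ n, restr q m = restr (Function.update q n (q n + 1)) m := by
    intro m hm
    rw [restr_eq_iff]
    intro i hi
    rw [Function.update_of_ne (by omega)]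
  refine ⟨⟨n, (hres n le_rfl), ?_⟩, hres n le_rfl⟩
  simp [Function.update_self]

lemma cut_nonempty {X : Type*} {V : List ℕ → Set X} (hc : CompleteScheme V)
    (q : ℕ → ℕ) (n : ℕ) : (cut V q n).Nonempty := by
  rcases hc (Function.update q n (q n + 1)) with ⟨x, hx⟩
  exact ⟨x, mem_iUnion₂.2 ⟨_, rseq_self_mem q n, hx⟩⟩

lemma fruit_schemeS (r : ℕ → ℕ) : fruit SchemeS r = {r} := by
  ext p
  simp only [fruit, SchemeS, mem_iInter, mem_setOf_eq, mem_singleton_iff]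
  constructor
  · intro h
    funext i
    have := h (i + 1)
    simp only [restr, List.length_map, List.length_range] at this
    have := (restr_eq_iff.1 this) i (by omega)
    exact this
  · rintro rfl n
    simp [restr]

lemma cut_schemeS (p : ℕ → ℕ) (n : ℕ) : cut SchemeS p n = rsequences p n := by
  ext r
  simp only [cut, mem_iUnion₂]
  constructor
  · rintro ⟨s, hs, hr⟩
    rw [fruit_schemeS] at hr
    rwa [hr]
  · intro h
    exact ⟨r, h, by rw [fruit_schemeS]; rfl⟩

lemma tri_ge {p q : ℕ → ℕ} {n k : ℕ} (hk : restr p k = restr q k ∧ p k < q k)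
    (hn : restr p n = restr q n) : n ≤ k := by
  by_contra h
  have := (restr_eq_iff.1 hn) k (by omega)
  omega

lemma lemA {p q : ℕ → ℕ} {n : ℕ} (h : q ∈ rsequences p n) :
    ∃ m, n ≤ m ∧ rsequences q m ⊆ rsequences p n := by
  obtain ⟨⟨k, hk1, hk2⟩, hn⟩ := h
  have hkn : n ≤ k := tri_ge ⟨hk1, hk2⟩ hn
  refine ⟨k + 1, by omega, ?_⟩
  rintro r ⟨_, hr⟩
  have hqr : ∀ i ≤ k, q i = r i := fun i hi => (restr_eq_iff.1 hr) i (by omega)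
  refine ⟨⟨k, ?_, ?_⟩, ?_⟩
  · rw [hk1, restr_eq_iff]
    exact fun i hi => hqr i (by omega)
  · rw [← hqr k le_rfl]; exact hk2
  · rw [hn, restr_eq_iff]
    exact fun i hi => hqr i (by omega)
lemma BB_basis_mem {Y : Type*} {τ : TopologicalSpace Y} {V : List ℕ → Set Y}
    {q : ℕ → ℕ} {x : Y} (h : q ∈ BB τ V x) {U : Set Y} (hU : IsOpen[τ] U) (hxU : x ∈ U) :
    ∃ m, cut V q m ∪ {x} ⊆ U := by
  obtain ⟨_, _, hb⟩ := h
  have : U ∈ @nhds Y τ x := hU.mem_nhds hxU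
  rcases hb.mem_iff.1 this with ⟨m, _, hm⟩
  exact ⟨m, hm⟩

lemma BB_unique {Y : Type*} {τ : TopologicalSpace Y} (hT2 : @T2Space Y τ)
    {V : List ℕ → Set Y} (hc : CompleteScheme V) {t : ℕ → ℕ} {y z : Y}
    (hy : t ∈ BB τ V y) (hz : t ∈ BB τ V z) : y = z := by
  by_contra hne
  obtain ⟨U, W, hU, hW, hyU, hzW, hUW⟩ := @t2_separation Y τ hT2 y z hne
  obtain ⟨m, hm⟩ := BB_basis_mem hy hU hyU
  obtain ⟨m', hm'⟩ := BB_basis_mem hz hW hzW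
  obtain ⟨w, hw⟩ := cut_nonempty hc t (max m m')
  have h1 : w ∈ U := hm (Or.inl (cut_anti V (le_max_left m m') hw))
  have h2 : w ∈ W := hm' (Or.inl (cut_anti V (le_max_right m m') hw))
  exact hUW.ne_of_mem h1 h2 rfl

lemma branch_exists {Y : Type*} {V : List ℕ → Set Y} (hcov : Covering V) (x : Y) :
    ∃ q : ℕ → ℕ, x ∈ fruit V q := by
  obtain ⟨h0, hstep⟩ := hcov
  have key : ∀ a : List ℕ, x ∈ V a → ∃ n, x ∈ V (a ++ [n]) := by
    intro a ha
    rw [hstep a] at ha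
    exact mem_iUnion.1 ha
  let F : {a : List ℕ // x ∈ V a} → {a : List ℕ // x ∈ V a} :=
    fun a => ⟨a.1 ++ [(key a.1 a.2).choose], (key a.1 a.2).choose_spec⟩
  let L : ℕ → {a : List ℕ // x ∈ V a} := fun n => F^[n] ⟨[], by rw [h0]; trivial⟩
  have hLsucc : ∀ n, L (n+1) = F (L n) := fun n => Function.iterate_succ_apply' F n _
  let c : ℕ → ℕ := fun n => (key (L n).1 (L n).2).choose
  have hLc : ∀ n, (L (n+1)).1 = (L n).1 ++ [c n] := by
    intro n; rw [hLsucc n]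
  refine ⟨c, ?_⟩
  have hres : ∀ n, restr c n = (L n).1 := by
    intro n
    induction n with
    | zero => rfl
    | succ k ih => rw [restr_succ, hLc k, ih]
  rw [fruit]
  exact mem_iInter.2 fun n => by rw [hres n]; exact (L n).2
lemma sigmaS_open_char {U : Set (ℕ → ℕ)} (h : IsOpen[sigmaS] U) :
    ∀ q ∈ U, ∃ m, rsequences q m ∪ {q} ⊆ U := by
  change TopologicalSpace.GenerateOpen _ U at h
  induction h with
  | basic s hs =>
    obtain ⟨p, n, rfl⟩ := hs
    rw [cut_schemeS]
    intro q hq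
    rcases hq with hq | hq
    · obtain ⟨m, _, hm⟩ := lemA hq
      exact ⟨m, fun r hr => hr.elim (fun h' => Or.inl (hm h')) (fun h' => Or.inl (h' ▸ hq))⟩
    · rw [mem_singleton_iff] at hq
      subst hq
      exact ⟨n, fun r hr => hr.elim Or.inl Or.inr⟩
  | univ => exact fun q _ => ⟨0, subset_univ _⟩
  | inter s t _ _ ihs iht =>
    intro q hq
    obtain ⟨m1, h1⟩ := ihs q hq.1
    obtain ⟨m2, h2⟩ := iht q hq.2
    refine ⟨max m1 m2, fun r hr => ?_⟩
    rcases hr with hr | hr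
    · exact ⟨h1 (Or.inl (rseq_anti (le_max_left m1 m2) hr)),
        h2 (Or.inl (rseq_anti (le_max_right m1 m2) hr))⟩
    · exact ⟨h1 (Or.inr hr), h2 (Or.inr hr)⟩
  | sUnion S _ ih =>
    intro q hq
    obtain ⟨s, hsS, hqs⟩ := hq
    obtain ⟨m, hm⟩ := ih s hsS q hqs
    exact ⟨m, fun r hr => ⟨s, hsS, hm hr⟩⟩

/-- Given `r ∈ rsequences q m` and `y ∈ fruit V r`, there is a base branch `t` of `y`
which also lies in `rsequences q m`. -/
lemma shift_lemma {Y : Type*} {τ : TopologicalSpace Y} {V : List ℕ → Set Y}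
    (hS1 : ∀ x : Y, ∀ q ∈ branches V x, ∀ n : ℕ, ∃ t ∈ BB τ V x, restr t n = restr q n)
    {q r : ℕ → ℕ} {m : ℕ} (hr : r ∈ rsequences q m) {y : Y} (hy : y ∈ fruit V r) :
    ∃ t ∈ BB τ V y, t ∈ rsequences q m := by
  obtain ⟨⟨k, hk1, hk2⟩, hm⟩ := hr
  have hkm : m ≤ k := tri_ge ⟨hk1, hk2⟩ hm
  obtain ⟨t, htBB, htres⟩ := hS1 y r hy (k + 1)
  have htr : ∀ i ≤ k, t i = r i := fun i hi => (restr_eq_iff.1 htres) i (by omega)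
  refine ⟨t, htBB, ⟨k, ?_, ?_⟩, ?_⟩
  · rw [hk1, restr_eq_iff]
    exact fun i hi => (htr i (by omega)).symm
  · rw [htr k le_rfl]; exact hk2
  · rw [hm, restr_eq_iff]
    exact fun i hi => (htr i (by omega)).symm
/-- A Hausdorff space with a Sorgenfrey base is a continuous open image of
`(ℕ → ℕ, σ_𝕊)`. -/
theorem stmt4 {Y : Type*} (τ : TopologicalSpace Y) (hT2 : @T2Space Y τ)
    (V : List ℕ → Set Y) (hV : IsSorgenfreyBase τ V) :
    ∃ f : (ℕ → ℕ) → Y, @Continuous (ℕ → ℕ) Y sigmaS τ f ∧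
      @IsOpenMap (ℕ → ℕ) Y sigmaS τ f ∧ Function.Surjective f := by
  obtain ⟨hOpen, hComp, hCov, hS1, hS2⟩ := hV
  letI : TopologicalSpace Y := τ
  letI : TopologicalSpace (ℕ → ℕ) := sigmaS
  let f : (ℕ → ℕ) → Y := fun q => (hS2 q).choose
  have hf : ∀ q, q ∈ BB τ V (f q) := fun q => (hS2 q).choose_spec
  have hfruit : ∀ q, f q ∈ fruit V q := fun q => (hf q).1
  have hfuniq : ∀ q x, q ∈ BB τ V x → f q = x :=
    fun q x h => BB_unique hT2 hComp (hf q) h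
  refine ⟨f, ?_, ?_, ?_⟩
  · -- continuity
    rw [continuous_def]
    intro s hs
    rw [isOpen_iff_forall_mem_open]
    intro q hq
    obtain ⟨m, hm⟩ := BB_basis_mem (hf q) hs hq
    refine ⟨cut SchemeS q m ∪ {q}, ?_, ?_, Or.inr rfl⟩
    · intro r hr
      rcases hr with hr | hr
      · rw [cut_schemeS] at hr
        exact hm (Or.inl (mem_iUnion₂.2 ⟨r, hr, hfruit r⟩))
      · rw [mem_singleton_iff] at hr
        subst hr
        exact hm (Or.inr rfl)
    · exact TopologicalSpace.GenerateOpen.basic _ ⟨q, m, rfl⟩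
  · -- open map
    intro U hU
    rw [isOpen_iff_forall_mem_open]
    rintro y ⟨q, hqU, rfl⟩
    obtain ⟨m, hm⟩ := sigmaS_open_char hU q hqU
    refine ⟨cut V q m ∪ {f q}, ?_, (hf q).2.1 m, Or.inr rfl⟩
    intro z hz
    rcases hz with hz | hz
    · rcases mem_iUnion₂.1 hz with ⟨r, hr, hzr⟩
      obtain ⟨t, htBB, htm⟩ := shift_lemma hS1 hr hzr
      exact ⟨t, hm (Or.inl htm), hfuniq t z htBB⟩
    · rw [mem_singleton_iff] at hz
      exact ⟨q, hqU, hz.symm⟩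
  · -- surjective
    intro x
    obtain ⟨q, hq⟩ := branch_exists hCov x
    obtain ⟨t, htBB, -⟩ := hS1 x q hq 0
    exact ⟨t, hfuniq t x htBB⟩
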